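/- Let $c^3 = 2$ and $z = \sqrt{-3}$, and let $u$ be the linear substitution $x_1 \mapsto x_1$, $x_2 \mapsto zx_3$, $x_3 \mapsto (1/z)x_2$, $x_4 \mapsto x_4$, $x_5 \mapsto (c/z)x_7$, $x_6 \mapsto (c^2/z)x_8$, $x_7 \mapsto (z/c)x_5$, $x_8 \mapsto (z/c^2)x_6$, $x_9 \mapsto -cx_{10}$, $x_{10} \mapsto -(1/c)x_9$. Then $u$ maps the quadric $x_3x_4 + x_6x_9 - x_5x_{10}$ into the linear span of the 28 quadrics defining the canonical model of $X_0(108)$. -/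
import Mathlib


set_option maxHeartbeats 2000000 in
open MvPolynomial in
/-- The 28 quadrics defining the canonical model of `X₀(108)` in `ℙ⁹`
(variable `i` corresponds to the coordinate `x_{i+1}` of the paper). -/
def canonicalQuadrics (R : Type*) [CommRing R] : Set (MvPolynomial (Fin 10) R) :=
  { X 2 * X 3 + X 5 * X 8 - X 4 * X 9,
    X 0 * X 1 - X 5 * X 8 - X 4 * X 9,
    X 1 * X 5 - X 2 * X 6 + X 0 * X 9,
    X 3 * X 4 - X 0 * X 7 + X 5 * X 9,
    X 0 * X 7 - X 2 * X 8 + X 5 * X 9,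
    X 3 * X 5 + X 0 * X 6 - X 2 * X 9,
    X 3 * X 6 - 2 * X 7 * X 8 + X 1 * X 9,
    X 2 * X 6 - 2 * X 4 * X 7 + X 0 * X 9,
    X 1 * X 4 - 2 * X 2 * X 7 + X 0 * X 8,
    X 1 * X 4 - 2 * X 5 * X 6 - X 0 * X 8,
    X 1 * X 3 + X 6 * X 8 - 2 * X 7 * X 9,
    X 0 * X 6 - 2 * X 4 * X 8 + X 2 * X 9,
    X 1 * X 2 - X 4 * X 6 - 2 * X 5 * X 7,
    X 1 * X 2 + X 0 * X 3 - 2 * X 4 * X 6,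
    X 6 ^ 2 - X 1 * X 7 - X 3 * X 8 + X 9 ^ 2,
    X 0 ^ 2 - X 2 ^ 2 + 2 * X 4 * X 5,
    3 * X 0 * X 4 - 2 * X 3 * X 7 - X 1 * X 8,
    3 * X 5 ^ 2 - X 6 ^ 2 + X 9 ^ 2,
    3 * X 0 * X 2 - X 6 * X 8 - 2 * X 7 * X 9,
    3 * X 0 * X 5 + X 3 * X 6 - X 1 * X 9,
    3 * X 2 * X 5 - X 1 * X 6 + X 3 * X 9,
    3 * X 2 * X 4 - X 6 ^ 2 - X 1 * X 7 - X 9 ^ 2,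
    3 * X 0 ^ 2 - X 3 ^ 2 - 2 * X 8 * X 9,
    X 1 ^ 2 - 3 * X 2 ^ 2 + 2 * X 8 * X 9,
    X 1 ^ 2 + X 3 ^ 2 - 4 * X 6 * X 7 + 2 * X 8 * X 9,
    X 1 * X 6 - 4 * X 7 ^ 2 + 2 * X 8 ^ 2 + X 3 * X 9,
    X 3 * X 7 + X 1 * X 8 - 2 * X 6 * X 9,
    3 * X 4 ^ 2 - X 1 * X 6 - X 8 ^ 2 - X 3 * X 9 }

set_option maxHeartbeats 2000000 in
open MvPolynomial in
/-- The linear substitution `u`: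
`x₁ ↦ x₁, x₂ ↦ z x₃, x₃ ↦ (1/z) x₂, x₄ ↦ x₄, x₅ ↦ (c/z) x₇, x₆ ↦ (c²/z) x₈,`
`x₇ ↦ (z/c) x₅, x₈ ↦ (z/c²) x₆, x₉ ↦ -c x₁₀, x₁₀ ↦ -(1/c) x₉`. -/
noncomputable def uSubst (c z : ℂ) : Fin 10 → MvPolynomial (Fin 10) ℂ :=
  ![X 0, C z * X 2, C z⁻¹ * X 1, X 3, C (c / z) * X 6, C (c ^ 2 / z) * X 7,
    C (z / c) * X 4, C (z / c ^ 2) * X 5, -(C c) * X 9, -(C (1 / c)) * X 8]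

set_option maxHeartbeats 2000000 in
open MvPolynomial in
/-- For `c³ = 2`, `z = √-3`, the substitution `u` maps the quadric
`x₃x₄ + x₆x₉ - x₅x₁₀` into the linear span of the 28 quadrics defining the canonical
model of `X₀(108)`. -/
theorem u_maps_quadric_into_span (c z : ℂ) (hc : c ^ 3 = 2) (hz : z ^ 2 = -3) :
    (aeval (uSubst c z)) (X 2 * X 3 + X 5 * X 8 - X 4 * X 9 : MvPolynomial (Fin 10) ℂ)
      ∈ Submodule.span ℂ (canonicalQuadrics ℂ) := by
  have hzne : z ≠ 0 := by intro h; rw [h] at hz; norm_num at hz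
  have hcne : c ≠ 0 := by intro h; rw [h] at hc; norm_num at hc
  have hC : (C c : MvPolynomial (Fin 10) ℂ) ^ 3 = C 2 := by rw [← map_pow, hc]
  have key : (aeval (uSubst c z)) (X 2 * X 3 + X 5 * X 8 - X 4 * X 9 : MvPolynomial (Fin 10) ℂ)
      = z⁻¹ • (X 1 * X 3 + X 6 * X 8 - 2 * X 7 * X 9 : MvPolynomial (Fin 10) ℂ) := by
    have e2 : (aeval (uSubst c z)) (X 2 : MvPolynomial (Fin 10) ℂ) = C z⁻¹ * X 1 := by
      rw [aeval_X]; rfl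
    have e3 : (aeval (uSubst c z)) (X 3 : MvPolynomial (Fin 10) ℂ) = X 3 := by
      rw [aeval_X]; rfl
    have e4 : (aeval (uSubst c z)) (X 4 : MvPolynomial (Fin 10) ℂ) = C (c / z) * X 6 := by
      rw [aeval_X]; rfl
    have e5 : (aeval (uSubst c z)) (X 5 : MvPolynomial (Fin 10) ℂ) = C (c ^ 2 / z) * X 7 := by
      rw [aeval_X]; rfl
    have e8 : (aeval (uSubst c z)) (X 8 : MvPolynomial (Fin 10) ℂ) = -(C c) * X 9 := by
      rw [aeval_X]; rfl
    have e9 : (aeval (uSubst c z)) (X 9 : MvPolynomial (Fin 10) ℂ) = -(C (1 / c)) * X 8 := by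
      rw [aeval_X]; rfl
    rw [map_sub, map_add, map_mul, map_mul, map_mul, e2, e3, e4, e5, e8, e9,
      Algebra.smul_def]
    simp only [algebraMap_eq, div_eq_mul_inv, one_mul, map_mul, map_neg, map_inv₀, map_pow]
    have h2 : (C c : MvPolynomial (Fin 10) ℂ) ^ 2 * C c = 2 := by
      rw [← pow_succ, hC, map_ofNat]
    have hCcinv : (C c : MvPolynomial (Fin 10) ℂ) * C c⁻¹ = 1 := by
      rw [← map_mul, mul_inv_cancel₀ hcne, map_one]
    linear_combination (-(C z⁻¹) * X 7 * X 9) * h2 +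
      (C z⁻¹ * X 6 * X 8) * hCcinv
  rw [key]
  exact Submodule.smul_mem _ _ (Submodule.subset_span (by
    unfold canonicalQuadrics
    simp only [Set.mem_insert_iff, Set.mem_singleton_iff]
    tauto))
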